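/- arXiv:2009.08179 — 3 statements merged into one kernel-verified Lean document; each statement's English description precedes it below -/
import Mathlib

section
/- Let (G,+) be a commutative inverse semigroup and a, b, c ∈ G with a ≤_q b (i.e., a + a' + b = b). Then the map μ_{a,b,c} : G → G defined by μ_{a,b,c}(x) = a + a' if x ≤_q c and μ_{a,b,c}(x) = b + b' otherwise, is an endomorphism of (G,+). -/
/-- A commutative inverse (additive) semigroup: each element `a` has a unique
`a'` with `a + a' + a = a` and `a' + a + a' = a'`. -/
class CIS (G : Type*) extends AddCommSemigroup G where
  inv : G → G
  add_inv_add : ∀ a : G, a + inv a + a = a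
  inv_add_inv : ∀ a : G, inv a + a + inv a = inv a
  inv_unique : ∀ a b : G, a + b + a = a → b + a + b = b → b = inv a

variable {G : Type*} [CIS G]

/-- The quasi-order `a ≤_q b ↔ a + a' + b = b`. -/
def leq (a b : G) : Prop := a + CIS.inv a + b = b

/-- The constant map `λ_a : x ↦ a + a'`. -/
def lam (a : G) : G → G := fun _ => a + CIS.inv a

/-- `f : G → G` is an endomorphism of `(G, +)`. -/
def IsEnd (f : G → G) : Prop := ∀ x y : G, f (x + y) = f x + f y

/-- If `a ≤_q b`, then the map `μ_{a,b,c}`, sending `x` to `a + a'` when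
`x ≤_q c` and to `b + b'` otherwise, is an endomorphism of `(G, +)`. -/
theorem mu_isEnd (a b c : G) (hab : leq a b) (f : G → G)
    (hf : ∀ x : G, (leq x c → f x = a + CIS.inv a) ∧
      (¬ leq x c → f x = b + CIS.inv b)) :
    IsEnd f := by
  have inv_add : ∀ x y : G, CIS.inv (x + y) = CIS.inv x + CIS.inv y := by
    intro x y
    symm; apply CIS.inv_unique
    · have hx := CIS.add_inv_add x
      have hy := CIS.add_inv_add y
      calc x + y + (CIS.inv x + CIS.inv y) + (x + y)
          = (x + CIS.inv x + x) + (y + CIS.inv y + y) := by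
            simp only [add_comm, add_left_comm, add_assoc]
        _ = x + y := by rw [hx, hy]
    · have hx := CIS.inv_add_inv x
      have hy := CIS.inv_add_inv y
      calc CIS.inv x + CIS.inv y + (x + y) + (CIS.inv x + CIS.inv y)
          = (CIS.inv x + x + CIS.inv x) + (CIS.inv y + y + CIS.inv y) := by
            simp only [add_comm, add_left_comm, add_assoc]
        _ = CIS.inv x + CIS.inv y := by rw [hx, hy]
  have idem : ∀ x : G, (x + CIS.inv x) + (x + CIS.inv x) = x + CIS.inv x := by
    intro x
    calc (x + CIS.inv x) + (x + CIS.inv x)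
        = (x + CIS.inv x + x) + CIS.inv x := by
          simp only [add_comm, add_left_comm, add_assoc]
      _ = x + CIS.inv x := by rw [CIS.add_inv_add]
  have key : ∀ x y : G, leq (x + y) c ↔ (leq x c ∧ leq y c) := by
    intro x y
    unfold leq
    rw [inv_add]
    constructor
    · intro h
      constructor
      · calc x + CIS.inv x + c
            = x + CIS.inv x + (x + y + (CIS.inv x + CIS.inv y) + c) := by rw [h]
          _ = (x + CIS.inv x + x) + (y + (CIS.inv x + CIS.inv y) + c) := by
              simp only [add_comm, add_left_comm, add_assoc]
          _ = x + (y + (CIS.inv x + CIS.inv y) + c) := by rw [CIS.add_inv_add]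
          _ = x + y + (CIS.inv x + CIS.inv y) + c := by
              simp only [add_comm, add_left_comm, add_assoc]
          _ = c := h
      · calc y + CIS.inv y + c
            = y + CIS.inv y + (x + y + (CIS.inv x + CIS.inv y) + c) := by rw [h]
          _ = (y + CIS.inv y + y) + (x + (CIS.inv x + CIS.inv y) + c) := by
              simp only [add_comm, add_left_comm, add_assoc]
          _ = y + (x + (CIS.inv x + CIS.inv y) + c) := by rw [CIS.add_inv_add]
          _ = x + y + (CIS.inv x + CIS.inv y) + c := by
              simp only [add_comm, add_left_comm, add_assoc]
          _ = c := h
    · rintro ⟨hx, hy⟩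
      calc x + y + (CIS.inv x + CIS.inv y) + c
          = x + CIS.inv x + (y + CIS.inv y + c) := by
            simp only [add_comm, add_left_comm, add_assoc]
        _ = x + CIS.inv x + c := by rw [hy]
        _ = c := hx
  intro x y
  by_cases hx : leq x c <;> by_cases hy : leq y c
  · rw [((hf x).1 hx), ((hf y).1 hy), ((hf (x + y)).1 ((key x y).2 ⟨hx, hy⟩)), idem]
  · have hxy : ¬ leq (x + y) c := fun h => hy ((key x y).1 h).2
    rw [((hf x).1 hx), ((hf y).2 hy), ((hf (x + y)).2 hxy), ← add_assoc, hab]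
  · have hxy : ¬ leq (x + y) c := fun h => hx ((key x y).1 h).1
    rw [((hf x).2 hx), ((hf y).1 hy), ((hf (x + y)).2 hxy), add_comm (b + CIS.inv b),
      ← add_assoc, hab]
  · have hxy : ¬ leq (x + y) c := fun h => hx ((key x y).1 h).1
    rw [((hf x).2 hx), ((hf y).2 hy), ((hf (x + y)).2 hxy), idem]
end

section
/- If (G,+) is a commutative inverse semigroup with at least two idempotents, then the congruence 𝓡_I on End(G) (f 𝓡_I g iff f + λ_a = g + λ_a for some a) is not the identity relation; in particular, for distinct idempotents e₁ ≠ e₂ one has λ_{e₁} ≠ λ_{e₂} and λ_{e₁} + λ_{e₁+e₂} = λ_{e₂} + λ_{e₁+e₂}. -/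
variable {G : Type*} [CIS G]

/-- The relation `𝓡_I` on `End(G)`. -/
def RI (f g : G → G) : Prop := ∃ a : G, ∀ x : G, f x + lam a x = g x + lam a x


lemma inv_idem {G : Type*} [CIS G] (e : G) (he : e + e = e) : CIS.inv e = e := by
  have := CIS.inv_unique e e (by rw [he, he]) (by rw [he, he])
  exact this.symm

lemma lam_idem {G : Type*} [CIS G] (e : G) (he : e + e = e) : ∀ x : G, lam e x = e := by
  intro x; simp [lam, inv_idem e he, he]

/-- If `G` has two distinct idempotents `e₁ ≠ e₂`, then `λ_{e₁} ≠ λ_{e₂}`,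
`λ_{e₁} + λ_{e₁+e₂} = λ_{e₂} + λ_{e₁+e₂}`, and hence `𝓡_I` is not the
identity relation on `End(G)`. -/
theorem RI_ne_identity (e₁ e₂ : G) (h₁ : e₁ + e₁ = e₁) (h₂ : e₂ + e₂ = e₂)
    (hne : e₁ ≠ e₂) :
    lam e₁ ≠ (lam e₂ : G → G) ∧
    (∀ x : G, lam e₁ x + lam (e₁ + e₂) x = lam e₂ x + lam (e₁ + e₂) x) ∧
    (∃ f g : G → G, IsEnd f ∧ IsEnd g ∧ f ≠ g ∧ RI f g) := by
  have h12 : (e₁ + e₂) + (e₁ + e₂) = e₁ + e₂ := by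
    have : (e₁ + e₂) + (e₁ + e₂) = (e₁ + e₁) + (e₂ + e₂) := by
      simp only [add_assoc]; rw [add_comm e₂ (e₁ + e₂), add_assoc]
    rw [this, h₁, h₂]
  have l1 := lam_idem e₁ h₁
  have l2 := lam_idem e₂ h₂
  have l12 := lam_idem (e₁ + e₂) h12
  refine ⟨?_, ?_, ?_⟩
  · intro h
    exact hne (by rw [← l1 e₁, h, l2])
  · intro x
    rw [l1, l2, l12]
    rw [← add_assoc, h₁, add_comm e₂ (e₁ + e₂), add_assoc, h₂]
  · refine ⟨lam e₁, lam e₂, ?_, ?_, ?_, ⟨e₁ + e₂, ?_⟩⟩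
    · intro x y; rw [l1, l1, l1, h₁]
    · intro x y; rw [l2, l2, l2, h₂]
    · intro h; exact hne (by rw [← l1 e₁, h, l2])
    · intro x
      rw [l1, l2, l12]
      rw [← add_assoc, h₁, add_comm e₂ (e₁ + e₂), add_assoc, h₂]
end

section
/- Let (G,+) be a commutative inverse semigroup. The relation 𝓡_L on End(G), where f 𝓡_L g iff both the range of f and the range of g are lower bounded (f has lower bounded range iff there exists a ∈ G with a ≤_q f(x) for all x ∈ G), extended by declaring f 𝓡_L f for all f, is a congruence on the semiring End(G). -/
variable {G : Type*} [CIS G]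

/-- `f` has lower bounded range. -/
def LB (f : G → G) : Prop := ∃ a : G, ∀ x : G, leq a (f x)

/-- The relation `𝓡_L` on `End(G)`. -/
def RL (f g : G → G) : Prop := f = g ∨ (LB f ∧ LB g)

lemma end_inv {h : G → G} (hh : IsEnd h) (a : G) :
    h (CIS.inv a) = CIS.inv (h a) := by
  apply CIS.inv_unique
  · rw [← hh, ← hh]; exact congrArg h (CIS.add_inv_add a)
  · rw [← hh, ← hh]; exact congrArg h (CIS.inv_add_inv a)

lemma LB_addR {f h : G → G} (hf : LB f) : LB (fun x => f x + h x) := by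
  obtain ⟨a, ha⟩ := hf
  exact ⟨a, fun x => by
    show a + CIS.inv a + (f x + h x) = f x + h x
    rw [← add_assoc, ha x]⟩

lemma LB_addL {f h : G → G} (hf : LB f) : LB (fun x => h x + f x) := by
  obtain ⟨a, ha⟩ := hf
  exact ⟨a, fun x => by
    show a + CIS.inv a + (h x + f x) = h x + f x
    rw [add_left_comm, ha x]⟩

lemma LB_comp_left {f h : G → G} (hh : IsEnd h) (hf : LB f) : LB (h ∘ f) := by
  obtain ⟨a, ha⟩ := hf
  exact ⟨h a, fun x => by
    show h a + CIS.inv (h a) + h (f x) = h (f x)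
    rw [← end_inv hh, ← hh, ← hh]
    exact congrArg h (ha x)⟩

lemma LB_comp_right {f h : G → G} (hf : LB f) : LB (f ∘ h) := by
  obtain ⟨a, ha⟩ := hf
  exact ⟨a, fun x => ha (h x)⟩

/-- `𝓡_L` is a congruence on the semiring `End(G)`. -/
theorem RL_congruence :
    (∀ f : G → G, RL f f) ∧
    (∀ f g : G → G, RL f g → RL g f) ∧
    (∀ f g h : G → G, RL f g → RL g h → RL f h) ∧
    (∀ f g h : G → G, IsEnd f → IsEnd g → IsEnd h → RL f g →
      RL (fun x => f x + h x) (fun x => g x + h x) ∧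
      RL (fun x => h x + f x) (fun x => h x + g x)) ∧
    (∀ f g h : G → G, IsEnd f → IsEnd g → IsEnd h → RL f g →
      RL (h ∘ f) (h ∘ g) ∧ RL (f ∘ h) (g ∘ h)) := by
  refine ⟨fun f => Or.inl rfl, ?_, ?_, ?_, ?_⟩
  · rintro f g (rfl | ⟨h1, h2⟩)
    · exact Or.inl rfl
    · exact Or.inr ⟨h2, h1⟩
  · rintro f g h (rfl | ⟨h1, h2⟩) hgh
    · exact hgh
    · rcases hgh with rfl | ⟨h3, h4⟩
      · exact Or.inr ⟨h1, h2⟩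
      · exact Or.inr ⟨h1, h4⟩
  · rintro f g h _ _ _ (rfl | ⟨h1, h2⟩)
    · exact ⟨Or.inl rfl, Or.inl rfl⟩
    · exact ⟨Or.inr ⟨LB_addR h1, LB_addR h2⟩, Or.inr ⟨LB_addL h1, LB_addL h2⟩⟩
  · rintro f g h _ _ hh (rfl | ⟨h1, h2⟩)
    · exact ⟨Or.inl rfl, Or.inl rfl⟩
    · exact ⟨Or.inr ⟨LB_comp_left hh h1, LB_comp_left hh h2⟩,
        Or.inr ⟨LB_comp_right h1, LB_comp_right h2⟩⟩
end
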